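/- Consider the one-parameter family of coefficient vectors (0,0,1,d). Over the field ℚ(t) of rational functions in one variable t, the matrix of consequences M(0,0,1,t) has rank exactly 31; moreover, over ℚ, the matrix M(0,0,1,0) has rank exactly 26. -/

import Mathlib

/-- First components `p_i` (1-indexed columns) of the 42 quadruples. -/
def colP : Fin 42 → ℕ :=
  ![4,8,11,13,14,1,4,8,11,13,14,1,4,8,11,13,14,1,5,9,12,15,16,2,17,24,26,27,28,7,19,29,34,36,37,10,2,7,10,3,23,33]

/-- Second components `q_i`. -/
def colQ : Fin 42 → ℕ :=
  ![5,9,12,15,16,2,6,18,20,21,22,4,6,18,20,21,22,4,6,18,20,21,22,4,18,25,30,31,32,8,20,30,35,38,39,11,3,17,19,5,24,34]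

/-- Third components `r_i`. -/
def colR : Fin 42 → ℕ :=
  ![21,31,38,40,41,13,17,24,26,27,28,7,18,25,30,31,32,8,18,25,30,31,32,8,20,30,35,38,39,11,21,31,38,40,41,13,15,23,29,9,26,36]

/-- Fourth components `s_i`. -/
def colS : Fin 42 → ℕ :=
  ![22,32,39,41,42,14,22,32,39,41,42,14,19,29,34,36,37,10,20,30,35,38,39,11,21,31,38,40,41,13,22,32,39,41,42,14,16,28,33,12,27,37]

/-- The 42×42 matrix of consequences `M(a,b,c,d)` over a field `K`:
row `i` has entry `a` in column `p_i`, `b` in column `q_i`, `c` in column `r_i`,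
`d` in column `s_i` (columns counted 1-based), and `0` elsewhere. -/
def consMatrix (K : Type*) [Field K] (a b c d : K) : Matrix (Fin 42) (Fin 42) K :=
  fun i j =>
    (if (j : ℕ) + 1 = colP i then a else 0) +
    (if (j : ℕ) + 1 = colQ i then b else 0) +
    (if (j : ℕ) + 1 = colR i then c else 0) +
    (if (j : ℕ) + 1 = colS i then d else 0)

/-!
Row `i` of `M(0,0,1,d)` is `e(r i) + d • e(s i)`, an edge `r i → s i` of a graph on the 42
columns. For `d = 0` the rows are unit vectors, so the rank is the number of distinct `r i`,
namely 26. For `d = t` the graph has 11 connected components (counting isolated columns) and a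
grading `h` with `h (r i) = h (s i) + 1` on every edge, so `(-t) ^ h` restricted to a component
lies in the kernel: the rank is at most 42 - 11 = 31. An upper triangular 31 × 31 minor with
diagonal entries in `{1, t}` shows that it is at least 31.
-/

open Matrix Module

namespace Matrix

variable {m n ι K : Type*} [Field K]

theorem rank_add_card_le_of_mulVec_eq_zero [Fintype n] [Fintype ι] (A : Matrix m n K)
    {v : ι → n → K} (hv : LinearIndependent K v) (hA : ∀ k, A *ᵥ v k = 0) :
    A.rank + Fintype.card ι ≤ Fintype.card n := by
  have hspan : Submodule.span K (Set.range v) ≤ LinearMap.ker A.mulVecLin := by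
    rw [Submodule.span_le]
    rintro _ ⟨k, rfl⟩
    exact hA k
  calc A.rank + Fintype.card ι
      ≤ A.rank + finrank K (LinearMap.ker A.mulVecLin) := by
        rw [← finrank_span_eq_card hv]
        exact Nat.add_le_add_left (Submodule.finrank_mono hspan) _
    _ = Fintype.card n := by
        rw [rank, LinearMap.finrank_range_add_finrank_ker, finrank_fintype_fun_eq_card]

theorem card_le_rank_of_isUpperTriangular_submatrix [Fintype n] [Fintype ι] [LinearOrder ι]
    (A : Matrix m n K) (f : ι → m) (g : ι → n) (htri : (A.submatrix f g).IsUpperTriangular)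
    (hdiag : ∀ i, A (f i) (g i) ≠ 0) : Fintype.card ι ≤ A.rank := by
  have hdet : (A.submatrix f g).det ≠ 0 := by
    rw [det_of_isUpperTriangular htri]
    exact Finset.prod_ne_zero_iff.mpr fun i _ => hdiag i
  calc Fintype.card ι = (A.submatrix f g).rank := (rank_of_det_ne_zero hdet).symm
    _ ≤ A.rank := rank_submatrix_le A f g

end Matrix

theorem linearIndependent_fiberwise {κ μ K : Type*} [Field K] [Fintype μ] [DecidableEq μ]
    {c : κ → μ} (hc : Function.Surjective c) {w : κ → K} (hw : ∀ j, w j ≠ 0) :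
    LinearIndependent K (fun k j => if c j = k then w j else 0) := by
  rw [Fintype.linearIndependent_iff]
  intro a ha k
  obtain ⟨j, rfl⟩ := hc k
  have hj := congrFun ha j
  simp only [Finset.sum_apply, Pi.smul_apply, smul_eq_mul, mul_ite, mul_zero,
    Finset.sum_ite_eq, Finset.mem_univ, if_true, Pi.zero_apply] at hj
  exact (mul_eq_zero.mp hj).resolve_right (hw j)

section EdgeMatrix

variable {ι κ μ K : Type*} [Field K] [DecidableEq κ]

def edgeMatrix (r s : ι → κ) (d : K) : Matrix ι κ K :=
  Matrix.of fun i => Pi.single (r i) 1 + Pi.single (s i) d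

variable (r s : ι → κ)

theorem edgeMatrix_mulVec [Fintype κ] (d : K) (v : κ → K) (i : ι) :
    (edgeMatrix r s d *ᵥ v) i = v (r i) + d * v (s i) := by
  simp only [edgeMatrix, mulVec, of_apply, add_dotProduct, single_dotProduct, one_mul]

theorem rank_edgeMatrix_zero [Fintype ι] [Fintype κ] :
    (edgeMatrix r s (0 : K)).rank = Fintype.card (Set.range r) := by
  let e : κ → κ → K := fun j => Pi.single j 1
  have hrow : (edgeMatrix r s (0 : K)).row = e ∘ r := by
    ext i j
    simp [edgeMatrix, e]
  have hrange : Set.range (e ∘ r) = Set.range (e ∘ ((↑) : Set.range r → κ)) := by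
    rw [Set.range_comp, Set.range_comp, Subtype.range_coe]
  rw [rank_eq_finrank_span_row, hrow, hrange, finrank_span_eq_card]
  exact (Pi.linearIndependent_single_one κ K).comp _ Subtype.val_injective

theorem rank_edgeMatrix_add_card_le [Fintype κ] [Fintype μ] [DecidableEq μ] {d : K}
    (hd : d ≠ 0) {c : κ → μ} (hc : Function.Surjective c) (hce : ∀ i, c (r i) = c (s i))
    (h : κ → ℕ) (hh : ∀ i, h (r i) = h (s i) + 1) :
    (edgeMatrix r s d).rank + Fintype.card μ ≤ Fintype.card κ := by
  have hw : ∀ j, (-d) ^ h j ≠ 0 := fun j => pow_ne_zero _ (neg_ne_zero.mpr hd)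
  refine rank_add_card_le_of_mulVec_eq_zero _ (linearIndependent_fiberwise hc hw) ?_
  intro k
  funext i
  rw [edgeMatrix_mulVec, hce, hh, pow_succ, Pi.zero_apply]
  split_ifs <;> ring

theorem card_le_rank_edgeMatrix [Fintype κ] {n : ℕ} {d : K} (hd : d ≠ 0)
    (hrs : ∀ i, r i ≠ s i) (f : Fin n → ι) (g : Fin n → κ)
    (htri : ∀ i j, j < i → g j ≠ r (f i) ∧ g j ≠ s (f i))
    (hdiag : ∀ i, g i = r (f i) ∨ g i = s (f i)) : n ≤ (edgeMatrix r s d).rank := by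
  have hentry : ∀ i j, edgeMatrix r s d (f i) (g j)
      = (if g j = r (f i) then 1 else 0) + (if g j = s (f i) then d else 0) := by
    intro i j
    simp only [edgeMatrix, of_apply, Pi.add_apply, Pi.single_apply]
  simpa using card_le_rank_of_isUpperTriangular_submatrix _ f g
    (fun i j hji => by simp [hentry, htri i j hji])
    (fun i => by
      rw [hentry]
      rcases hdiag i with h | h <;> simp [h, hrs (f i), (hrs (f i)).symm, hd])

end EdgeMatrix

def colRFin (i : Fin 42) : Fin 42 := Fin.ofNat 42 (colR i - 1)

def colSFin (i : Fin 42) : Fin 42 := Fin.ofNat 42 (colS i - 1)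

theorem consMatrix_zero_zero_one (K : Type*) [Field K] (d : K) :
    consMatrix K 0 0 1 d = edgeMatrix colRFin colSFin d := by
  have hR : ∀ i j : Fin 42, ((j : ℕ) + 1 = colR i ↔ j = colRFin i) := by decide
  have hS : ∀ i j : Fin 42, ((j : ℕ) + 1 = colS i ↔ j = colSFin i) := by decide
  ext i j
  simp [consMatrix, edgeMatrix, Pi.single_apply, hR, hS]

def consComponent : Fin 42 → Fin 11 :=
  ![0,1,2,3,4,5,6,6,7,6,6,7,6,6,8,8,9,9,9,9,9,9,
    10,10,10,10,10,10,10,10,10,10,10,10,10,10,10,10,10,10,10,10]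

def consHeight : Fin 42 → ℕ :=
  ![0,0,0,0,0,0,1,3,1,2,2,0,1,0,1,0,1,3,2,2,1,0,2,4,6,3,2,1,5,5,4,3,4,4,4,3,2,3,2,2,1,0]

def consMinorRow : Fin 31 → Fin 42 :=
  ![39,38,13,19,37,10,36,20,17,23,29,5,16,15,14,25,12,18,24,0,11,9,8,2,7,1,21,27,3,4,6]

def consMinorCol : Fin 31 → Fin 42 :=
  ![8,32,28,24,22,27,14,34,9,7,10,12,36,35,33,29,18,17,19,20,6,26,25,38,23,31,30,37,39,40,16]

/-- For the one-parameter family `(0,0,1,d)`: over the rational function field `ℚ(t)`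
the matrix of consequences `M(0,0,1,t)` has rank exactly 31, and over `ℚ` the matrix
`M(0,0,1,0)` has rank exactly 26. -/
theorem stmt_8 :
    (consMatrix (RatFunc ℚ) 0 0 1 RatFunc.X).rank = 31 ∧
    (consMatrix ℚ 0 0 1 0).rank = 26 := by
  rw [consMatrix_zero_zero_one, consMatrix_zero_zero_one]
  refine ⟨le_antisymm ?_ ?_, ?_⟩
  · have := rank_edgeMatrix_add_card_le colRFin colSFin (RatFunc.X_ne_zero (K := ℚ))
      (c := consComponent) (by decide) (by decide) consHeight (by decide)
    simp only [Fintype.card_fin] at this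
    omega
  · exact card_le_rank_edgeMatrix colRFin colSFin (RatFunc.X_ne_zero (K := ℚ)) (by decide)
      consMinorRow consMinorCol (by decide) (by decide)
  · rw [rank_edgeMatrix_zero]
    decide
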